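/- Let s ≥ 1, β > s, ρ_j > 0 for j = 1,…,s, and let K ≥ s be an integer. Then ∑_{k ∈ ℤ^s, ∑_{j}|k_j| > K} (r_{β,ρ,s}(k))^{1/2} ≤ ( ∏_{j=1}^s max{1, √ρ_j} ) · ∑_{k'=K+1}^{∞} 2^s · C(k'+s−1, s−1) · (k' − s)^{−β}, where C(n, r) denotes the binomial coefficient; in particular the left-hand series converges. -/

import Mathlib

/-!
Bounding `√ρ_j` and `1` by `max 1 √ρ_j`, a summand with `∑ |k_j| = n` is at most
`(∏ max 1 √ρ_j) · (∏ max (|k_j|, 1))^(-β)`, and for factors `b_j ≥ 1` one has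
`∏ b_j ≥ ∑ b_j - s + 1`, so the summand is at most `(∏ max 1 √ρ_j) · (n - s)^(-β)`.
A point of the ℓ¹-sphere of radius `n` in `ℤ^s` is determined by its signs and by the
composition `(|k_j|)_j` of `n`, so the sphere has at most `2^s C(n+s-1, s-1)` points.
Summing sphere by sphere over `n = K + 1 + m` gives the bound, and the majorant converges
because its `m`-th term is `O((m + 1)^(s - 1 - β))` with `s - 1 - β < -1`.
-/

open Real Finset

noncomputable section

/-- One-dimensional weight `r_{β,ρ}(k)`. -/
def rone (β ρ : ℝ) (k : ℤ) : ℝ := if k = 0 then 1 else ρ * |(k : ℝ)| ^ (-(2 * β))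

/-- Multidimensional weight `r_{β,ρ,s}(k) = ∏_j r_{β,ρ_j}(k_j)`. -/
def rmulti {s : ℕ} (β : ℝ) (ρ : Fin s → ℝ) (k : Fin s → ℤ) : ℝ := ∏ j, rone β (ρ j) (k j)

theorem Finset.sum_add_one_le_prod_add_card {ι : Type*} (t : Finset ι) {b : ι → ℕ}
    (hb : ∀ i ∈ t, 1 ≤ b i) : ∑ i ∈ t, b i + 1 ≤ ∏ i ∈ t, b i + #t := by
  induction t using Finset.cons_induction with
  | empty => simp
  | cons i t hi ih =>
    rw [sum_cons, prod_cons, card_cons]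
    have hbi : 1 ≤ b i := hb i (mem_cons_self i t)
    have hP : 1 ≤ ∏ j ∈ t, b j := one_le_prod' fun j hj => hb j (mem_cons_of_mem hj)
    have := ih fun j hj => hb j (mem_cons_of_mem hj)
    nlinarith

theorem sqrt_rone_le (β : ℝ) {ρ : ℝ} (hρ : 0 ≤ ρ) (k : ℤ) :
    √(rone β ρ k) ≤ max 1 √ρ * ((max k.natAbs 1 : ℕ) : ℝ) ^ (-β) := by
  rcases eq_or_ne k 0 with rfl | hk
  · simp [rone]
  have habs : |(k : ℝ)| = (k.natAbs : ℝ) := by rw [Nat.cast_natAbs, Int.cast_abs]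
  have hsqrt : √((k.natAbs : ℝ) ^ (-(2 * β))) = (k.natAbs : ℝ) ^ (-β) := by
    rw [sqrt_eq_rpow, ← rpow_mul (Nat.cast_nonneg _)]
    ring_nf
  have hmax : max k.natAbs 1 = k.natAbs := max_eq_left (Int.natAbs_pos.2 hk)
  rw [rone, if_neg hk, habs, sqrt_mul hρ, hsqrt, hmax]
  gcongr
  exact le_max_right _ _

theorem sqrt_rmulti_le {s : ℕ} (β : ℝ) {ρ : Fin s → ℝ} (hρ : ∀ j, 0 ≤ ρ j) (k : Fin s → ℤ) :
    √(rmulti β ρ k) ≤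
      (∏ j, max 1 √(ρ j)) * ((∏ j, max (k j).natAbs 1 : ℕ) : ℝ) ^ (-β) := by
  have hr : ∀ j ∈ univ, 0 ≤ rone β (ρ j) (k j) := fun j _ => by
    unfold rone; split_ifs
    · exact zero_le_one
    · exact mul_nonneg (hρ j) (rpow_nonneg (abs_nonneg _) _)
  rw [rmulti, sqrt_eq_rpow, ← finsetProd_rpow _ _ hr, Nat.cast_prod,
    ← finsetProd_rpow _ _ fun j _ => Nat.cast_nonneg _, ← prod_mul_distrib]
  exact prod_le_prod (fun j _ => rpow_nonneg (hr j (mem_univ j)) _)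
    fun j _ => (sqrt_eq_rpow _).symm.trans_le (sqrt_rone_le β (hρ j) (k j))

theorem sqrt_rmulti_le_of_lt_sum_natAbs {s : ℕ} {β : ℝ} (hβ : 0 ≤ β) {ρ : Fin s → ℝ}
    (hρ : ∀ j, 0 ≤ ρ j) {k : Fin s → ℤ} (hk : s < ∑ j, (k j).natAbs) :
    √(rmulti β ρ k) ≤
      (∏ j, max 1 √(ρ j)) * (((∑ j, (k j).natAbs : ℕ) : ℝ) - s) ^ (-β) := by
  refine (sqrt_rmulti_le β hρ k).trans ?_
  have hC : 0 ≤ ∏ j, max 1 √(ρ j) := prod_nonneg fun j _ => zero_le_one.trans (le_max_left _ _)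
  have hprod : ∑ j, (k j).natAbs + 1 ≤ ∏ j, max (k j).natAbs 1 + s := by
    have hmax := sum_add_one_le_prod_add_card univ (b := fun j => max (k j).natAbs 1)
      fun j _ => le_max_right _ _
    have hsum := sum_le_sum (s := univ) fun j _ => le_max_left (k j).natAbs 1
    rw [card_univ, Fintype.card_fin] at hmax
    omega
  have hpos : (0 : ℝ) < ((∑ j, (k j).natAbs : ℕ) : ℝ) - s := by
    rw [sub_pos]; exact_mod_cast hk
  have hle : ((∑ j, (k j).natAbs : ℕ) : ℝ) - s ≤ ((∏ j, max (k j).natAbs 1 : ℕ) : ℝ) := by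
    have : ((∑ j, (k j).natAbs + 1 : ℕ) : ℝ) ≤ ((∏ j, max (k j).natAbs 1 + s : ℕ) : ℝ) := by
      exact_mod_cast hprod
    push_cast at this ⊢
    linarith
  exact mul_le_mul_of_nonneg_left (rpow_le_rpow_of_nonpos hpos hle (neg_nonpos.2 hβ)) hC

abbrev IntL1Sphere (s n : ℕ) : Type := {k : Fin s → ℤ // ∑ j, (k j).natAbs = n}

theorem Int.injective_decide_neg_natAbs :
    Function.Injective fun z : ℤ => (decide (z < 0), z.natAbs) := by
  intro a b h
  simp only [Prod.mk.injEq, decide_eq_decide] at h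
  omega

instance (s n : ℕ) : Finite {P : Fin s → ℕ // ∑ i, P i = n} :=
  .of_equiv _ (Sym.equivNatSumOfFintype (Fin s) n)

theorem natCard_natSum_eq_choose (s n : ℕ) :
    Nat.card {P : Fin s → ℕ // ∑ i, P i = n} = (s + n - 1).choose n := by
  rw [← Nat.card_congr (Sym.equivNatSumOfFintype (Fin s) n), Sym.natCard_sym_eq_choose,
    Nat.card_eq_fintype_card, Fintype.card_fin]

theorem IntL1Sphere.injective_signs_natAbs (s n : ℕ) :
    Function.Injective fun k : IntL1Sphere s n =>
      ((fun j => decide (k.1 j < 0)),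
        (⟨fun j => (k.1 j).natAbs, k.2⟩ : {P : Fin s → ℕ // ∑ i, P i = n})) := by
  intro k l h
  simp only [Prod.mk.injEq, Subtype.mk.injEq, funext_iff] at h
  exact Subtype.ext <| funext fun j =>
    Int.injective_decide_neg_natAbs (Prod.ext (h.1 j) (h.2 j))

instance (s n : ℕ) : Finite (IntL1Sphere s n) :=
  .of_injective _ (IntL1Sphere.injective_signs_natAbs s n)

theorem IntL1Sphere.natCard_le (s n : ℕ) :
    Nat.card (IntL1Sphere s n) ≤ 2 ^ s * (s + n - 1).choose n := by
  refine (Nat.card_le_card_of_injective _ (IntL1Sphere.injective_signs_natAbs s n)).trans_eq ?_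
  rw [Nat.card_prod, natCard_natSum_eq_choose, Nat.card_eq_fintype_card, Fintype.card_fun,
    Fintype.card_bool, Fintype.card_fin]

theorem tsum_le_natCard_mul {α : Type*} [Finite α] {f : α → ℝ} {c : ℝ} (hf : ∀ a, f a ≤ c) :
    ∑' a, f a ≤ Nat.card α * c := by
  have := Fintype.ofFinite α
  rw [tsum_fintype, Nat.card_eq_fintype_card, ← nsmul_eq_mul]
  exact sum_le_card_nsmul _ _ _ fun a _ => hf a

theorem summable_sigma_and_tsum_le {ι : Type*} {β : ι → Type*} [∀ i, Finite (β i)]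
    {g : (Σ i, β i) → ℝ} (hg : ∀ p, 0 ≤ g p) {b : ι → ℝ} (hb : Summable b)
    (hfiber : ∀ i, ∑' x, g ⟨i, x⟩ ≤ b i) : Summable g ∧ ∑' p, g p ≤ ∑' i, b i := by
  have hfiber_summable : ∀ i, Summable fun x => g ⟨i, x⟩ := fun _ => .of_finite
  have hout : Summable fun i => ∑' x, g ⟨i, x⟩ :=
    .of_nonneg_of_le (fun _ => tsum_nonneg fun _ => hg _) hfiber hb
  have hg_summable : Summable g := (summable_sigma_of_nonneg hg).2 ⟨hfiber_summable, hout⟩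
  refine ⟨hg_summable, ?_⟩
  rw [hg_summable.tsum_sigma' hfiber_summable]
  exact hout.tsum_le_tsum hfiber hb

theorem Nat.choose_add_le_mul_pow {a : ℕ} (ha : 1 ≤ a) (m k : ℕ) :
    (a + m).choose k ≤ (a * (m + 1)) ^ k :=
  (choose_le_pow _ _).trans (Nat.pow_le_pow_left (by nlinarith) k)

def tailMajorant (s K : ℕ) (β : ℝ) (m : ℕ) : ℝ :=
  2 ^ s * ((K + 1 + m + s - 1).choose (s - 1) : ℝ) * (((K : ℝ) + 1 + m) - s) ^ (-β)

theorem tailMajorant_nonneg {s K : ℕ} (hK : s ≤ K) (β : ℝ) (m : ℕ) :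
    0 ≤ tailMajorant s K β m := by
  have hbase : (0 : ℝ) ≤ (K : ℝ) + 1 + m - s := by
    have : (s : ℝ) ≤ K := by exact_mod_cast hK
    linarith [m.cast_nonneg (α := ℝ)]
  unfold tailMajorant
  positivity

theorem summable_tailMajorant {s K : ℕ} (hs : 1 ≤ s) (hK : s ≤ K) {β : ℝ} (hβ : s < β) :
    Summable (tailMajorant s K β) := by
  have hsK : (s : ℝ) ≤ K := by exact_mod_cast hK
  have hp : ((s - 1 : ℕ) : ℝ) - β < -1 := by rw [Nat.cast_sub hs]; push_cast; linarith
  have hpow : Summable fun m : ℕ => ((m : ℝ) + 1) ^ (((s - 1 : ℕ) : ℝ) - β) := by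
    simpa using (summable_nat_add_iff 1).2 (summable_nat_rpow.2 hp)
  refine .of_nonneg_of_le (tailMajorant_nonneg hK β) (fun m => ?_)
    (hpow.mul_left (2 ^ s * ((K + s : ℕ) : ℝ) ^ (s - 1)))
  have hx : (0 : ℝ) < (m : ℝ) + 1 := by positivity
  have hchoose : ((K + 1 + m + s - 1).choose (s - 1) : ℝ) ≤
      ((K + s : ℕ) : ℝ) ^ (s - 1) * ((m : ℝ) + 1) ^ (s - 1) := by
    rw [← mul_pow]
    exact_mod_cast (show K + 1 + m + s - 1 = (K + s) + m by omega) ▸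
      Nat.choose_add_le_mul_pow (by omega) m (s - 1)
  have hdecay : (((K : ℝ) + 1 + m) - s) ^ (-β) ≤ ((m : ℝ) + 1) ^ (-β) :=
    rpow_le_rpow_of_nonpos hx (by linarith) (by linarith)
  rw [rpow_sub hx, rpow_natCast, div_eq_mul_inv, ← rpow_neg hx.le]
  calc tailMajorant s K β m
      ≤ 2 ^ s * (((K + s : ℕ) : ℝ) ^ (s - 1) * ((m : ℝ) + 1) ^ (s - 1)) *
          ((m : ℝ) + 1) ^ (-β) :=
        mul_le_mul (mul_le_mul_of_nonneg_left hchoose (by positivity)) hdecay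
          (rpow_nonneg (by linarith) _) (by positivity)
    _ = _ := by ring

def tailEquivSigmaIntL1Sphere (s K : ℕ) :
    {k : Fin s → ℤ // K < ∑ j, (k j).natAbs} ≃ Σ m : ℕ, IntL1Sphere s (K + 1 + m) where
  toFun k := ⟨∑ j, (k.1 j).natAbs - (K + 1), k.1, by have := k.2; omega⟩
  invFun p := ⟨p.2.1, by have := p.2.2; omega⟩
  left_inv _ := rfl
  right_inv := by
    rintro ⟨m, k, hk⟩
    obtain rfl : ∑ j, (k j).natAbs - (K + 1) = m := by omega
    rfl

theorem tsum_sqrt_rmulti_intL1Sphere_le {s K : ℕ} (hs : 1 ≤ s) (hK : s ≤ K) {β : ℝ}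
    (hβ : 0 ≤ β) {ρ : Fin s → ℝ} (hρ : ∀ j, 0 ≤ ρ j) (m : ℕ) :
    ∑' k : IntL1Sphere s (K + 1 + m), √(rmulti β ρ k.1) ≤
      (∏ j, max 1 √(ρ j)) * tailMajorant s K β m := by
  set C := ∏ j, max 1 √(ρ j)
  set D := (((K : ℝ) + 1 + m) - s) ^ (-β)
  have hC : 0 ≤ C := prod_nonneg fun j _ => zero_le_one.trans (le_max_left _ _)
  have hsK : (s : ℝ) ≤ K := by exact_mod_cast hK
  have hterm : ∀ k : IntL1Sphere s (K + 1 + m), √(rmulti β ρ k.1) ≤ C * D := fun k => by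
    have := sqrt_rmulti_le_of_lt_sum_natAbs hβ hρ (k := k.1) (by rw [k.2]; omega)
    rwa [k.2, Nat.cast_add, Nat.cast_add, Nat.cast_one] at this
  have hcard : (Nat.card (IntL1Sphere s (K + 1 + m)) : ℝ) ≤
      2 ^ s * ((K + 1 + m + s - 1).choose (s - 1) : ℝ) := by
    have := IntL1Sphere.natCard_le s (K + 1 + m)
    rw [show s + (K + 1 + m) - 1 = (K + 1 + m) + (s - 1) by omega, Nat.choose_symm_add,
      show (K + 1 + m) + (s - 1) = K + 1 + m + s - 1 by omega] at this
    exact_mod_cast this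
  have hD : 0 ≤ D := rpow_nonneg (by linarith [m.cast_nonneg (α := ℝ)]) _
  calc _ ≤ Nat.card (IntL1Sphere s (K + 1 + m)) * (C * D) := tsum_le_natCard_mul hterm
    _ ≤ 2 ^ s * ((K + 1 + m + s - 1).choose (s - 1) : ℝ) * (C * D) :=
        mul_le_mul_of_nonneg_right hcard (mul_nonneg hC hD)
    _ = C * tailMajorant s K β m := by unfold tailMajorant; ring

/-- for `β > s` and `K ≥ s`,
`∑_{k ∈ ℤ^s, ∑_j |k_j| > K} (r_{β,ρ,s}(k))^{1/2}
  ≤ (∏_j max{1, √ρ_j}) · ∑_{k'=K+1}^∞ 2^s C(k'+s−1, s−1) (k'−s)^{−β}`,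
and in particular the left-hand series converges. -/
theorem stmt7 (s : ℕ) (hs : 1 ≤ s) (β : ℝ) (hβ : (s : ℝ) < β) (ρ : Fin s → ℝ)
    (hρ : ∀ j, 0 < ρ j) (K : ℕ) (hK : s ≤ K) :
    Summable (fun k : {k : Fin s → ℤ // K < ∑ j, (k j).natAbs} =>
      Real.sqrt (rmulti β ρ k.1)) ∧
    ∑' k : {k : Fin s → ℤ // K < ∑ j, (k j).natAbs}, Real.sqrt (rmulti β ρ k.1) ≤
      (∏ j, max 1 (Real.sqrt (ρ j))) *
        ∑' m : ℕ, (2 : ℝ) ^ s * (Nat.choose (K + 1 + m + s - 1) (s - 1) : ℝ) *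
          (((K : ℝ) + 1 + (m : ℝ)) - (s : ℝ)) ^ (-β) := by
  have hβ0 : 0 ≤ β := le_trans (Nat.cast_nonneg s) hβ.le
  let g : (Σ m : ℕ, IntL1Sphere s (K + 1 + m)) → ℝ := fun p => √(rmulti β ρ p.2.1)
  obtain ⟨hg, hle⟩ := summable_sigma_and_tsum_le (g := g) (fun _ => sqrt_nonneg _)
    ((summable_tailMajorant hs hK hβ).mul_left _)
    (tsum_sqrt_rmulti_intL1Sphere_le hs hK hβ0 fun j => (hρ j).le)
  let e := tailEquivSigmaIntL1Sphere s K
  refine ⟨(e.summable_iff (f := g)).2 hg, ?_⟩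
  rw [← tsum_mul_left]
  exact (e.tsum_eq g).trans_le hle

end
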